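/- Let A : ℝ^d → ℝ^{d×d} be a C¹ ℤ^d-periodic matrix-valued function with A(y) symmetric and positive semidefinite for every y, let v : ℝ^d → ℝ be a C² ℤ^d-periodic function, and let b := A∇v with flow X(t,x). Then for every x ∈ ℝ^d, X(t,x)/t → 0 as t → ∞. -/

import Mathlib

open MeasureTheory Filter Topology
open scoped RealInnerProductSpace

noncomputable section

/-- An integer vector `k ∈ ℤ^d` seen as a point of `ℝ^d`. -/
def intVec (d : ℕ) (k : Fin d → ℤ) : EuclideanSpace ℝ (Fin d) := WithLp.toLp 2 (fun i => (k i : ℝ))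

/-- A function on `ℝ^d` is `ℤ^d`-periodic. -/
def IsZdPeriodic {α : Type*} (d : ℕ) (f : EuclideanSpace ℝ (Fin d) → α) : Prop :=
  ∀ (x : EuclideanSpace ℝ (Fin d)) (k : Fin d → ℤ), f (x + intVec d k) = f x

/-- The unit cube `[0,1)^d`, a fundamental domain for the torus `Y_d = ℝ^d/ℤ^d`. -/
def unitCube (d : ℕ) : Set (EuclideanSpace ℝ (Fin d)) :=
  {x | ∀ i, x i ∈ Set.Ico (0 : ℝ) 1}

/-- A Borel probability measure on the torus `Y_d`, identified with a Borel probability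
measure on `ℝ^d` carried by the fundamental domain `[0,1)^d`. -/
def IsTorusMeasure {d : ℕ} (μ : Measure (EuclideanSpace ℝ (Fin d))) : Prop :=
  IsProbabilityMeasure μ ∧ μ (unitCube d)ᶜ = 0

/-- A measure on the torus is invariant for the flow `X` if
`∫ φ(X(t,y)) dμ(y) = ∫ φ dμ` for all `t` and all continuous `ℤ^d`-periodic `φ`. -/
def IsInvariantMeasure {d : ℕ} (X : ℝ → EuclideanSpace ℝ (Fin d) → EuclideanSpace ℝ (Fin d))
    (μ : Measure (EuclideanSpace ℝ (Fin d))) : Prop :=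
  ∀ (t : ℝ) (φ : EuclideanSpace ℝ (Fin d) → ℝ), Continuous φ → IsZdPeriodic d φ →
    ∫ y, φ (X t y) ∂μ = ∫ y, φ y ∂μ

/-!
Along a trajectory `d/dt v(X) = ⟪A∇v, ∇v⟫ ≥ 0`, so the total dissipation `∫₀ᵗ ⟪A∇v, ∇v⟫(X)` is
at most `2 sup |v|`. As `A` is positive semidefinite with `‖A‖ ≤ K`, `|A∇v|² ≤ K ⟪A∇v, ∇v⟫`, hence
by AM–GM the speed obeys `|Ẋ| ≤ δ + K/(4δ) · d/dt v(X)` for every `δ > 0`. Integrating,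
`|X(t) - X(0)| ≤ δ t + K sup |v| / (2δ)`, so `limsup |X(t)|/t ≤ δ` for every `δ > 0`.
-/

lemma exists_mem_unitCube_add_intVec_eq {d : ℕ} (x : EuclideanSpace ℝ (Fin d)) :
    ∃ y ∈ unitCube d, ∃ k, y + intVec d k = x := by
  refine ⟨WithLp.toLp 2 fun i => Int.fract (x i),
    fun i => ⟨Int.fract_nonneg _, Int.fract_lt_one _⟩, fun i => ⌊x i⌋, ?_⟩
  ext i
  simp [intVec, Int.fract_add_floor]

lemma IsZdPeriodic.exists_norm_le {d : ℕ} {F : Type*} [SeminormedAddCommGroup F]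
    {f : EuclideanSpace ℝ (Fin d) → F} (hper : IsZdPeriodic d f) (hf : Continuous f) :
    ∃ C, ∀ x, ‖f x‖ ≤ C := by
  obtain ⟨C, hC⟩ := (isCompact_Icc.image (PiLp.continuous_toLp 2 _)).exists_bound_of_continuousOn
    hf.continuousOn
  refine ⟨C, fun x => ?_⟩
  obtain ⟨y, hy, k, rfl⟩ := exists_mem_unitCube_add_intVec_eq x
  rw [hper]
  exact hC y ⟨WithLp.ofLp y, ⟨fun i => (hy i).1, fun i => (hy i).2.le⟩, rfl⟩

lemma IsZdPeriodic.exists_toEuclideanLin_bound {d : ℕ} {n : Type*} [Fintype n] [DecidableEq n]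
    {A : EuclideanSpace ℝ (Fin d) → Matrix n n ℝ} (hper : IsZdPeriodic d A)
    (hA : ∀ i j, Continuous fun y => A y i j) :
    ∃ K, ∀ y u, ‖(A y).toEuclideanLin u‖ ≤ K * ‖u‖ := by
  have hcont : Continuous fun y => Matrix.toEuclideanCLM (𝕜 := ℝ) (A y) :=
    (LinearMap.continuous_of_finiteDimensional
      (Matrix.toEuclideanCLM (n := n) (𝕜 := ℝ)).toAlgEquiv.toLinearEquiv.toLinearMap).comp
      (continuous_matrix hA)
  obtain ⟨K, hK⟩ := IsZdPeriodic.exists_norm_le (fun y k => by simp only [hper y k]) hcont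
  exact ⟨K, fun y u =>
    ((Matrix.toEuclideanCLM (𝕜 := ℝ) (A y)).le_opNorm u).trans (by gcongr; exact hK y)⟩

section PositiveOperator

variable {E : Type*} [NormedAddCommGroup E] [InnerProductSpace ℝ E]

lemma LinearMap.IsPositive.inner_apply_sq_le {T : E →ₗ[ℝ] E} (hT : T.IsPositive) (x y : E) :
    ⟪T x, y⟫ ^ 2 ≤ ⟪T x, x⟫ * ⟪T y, y⟫ := by
  let core : PreInnerProductSpace.Core ℝ E :=
    { inner := fun x y => ⟪T x, y⟫
      conj_inner_symm := fun x y => by simp [hT.isSymmetric x y, real_inner_comm]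
      re_inner_nonneg := fun x => hT.re_inner_nonneg_left x
      add_left := fun x y z => by simp [inner_add_left]
      smul_left := fun x y r => by simp [inner_smul_left] }
  have := InnerProductSpace.Core.inner_mul_inner_self_le (c := core) x y
  simp only [Real.norm_eq_abs, RCLike.re_to_real] at this
  change |⟪T x, y⟫| * |⟪T y, x⟫| ≤ ⟪T x, x⟫ * ⟪T y, y⟫ at this
  rwa [hT.isSymmetric y x, real_inner_comm (T x) y, ← abs_mul, abs_mul_self, ← sq] at this

lemma LinearMap.IsPositive.norm_apply_sq_le {T : E →ₗ[ℝ] E} (hT : T.IsPositive) {K : ℝ}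
    (hK : ∀ x, ‖T x‖ ≤ K * ‖x‖) (x : E) : ‖T x‖ ^ 2 ≤ K * ⟪T x, x⟫ := by
  rcases eq_or_ne (T x) 0 with h | h
  · simp [h]
  have hTTx : ⟪T (T x), T x⟫ ≤ K * ‖T x‖ ^ 2 :=
    calc ⟪T (T x), T x⟫ ≤ ‖T (T x)‖ * ‖T x‖ := real_inner_le_norm _ _
      _ ≤ K * ‖T x‖ * ‖T x‖ := by gcongr; exact hK _
      _ = K * ‖T x‖ ^ 2 := by ring
  have hcs : (‖T x‖ ^ 2) ^ 2 ≤ ⟪T x, x⟫ * (K * ‖T x‖ ^ 2) :=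
    calc (‖T x‖ ^ 2) ^ 2 = ⟪T x, T x⟫ ^ 2 := by rw [real_inner_self_eq_norm_sq]
      _ ≤ ⟪T x, x⟫ * ⟪T (T x), T x⟫ := hT.inner_apply_sq_le x (T x)
      _ ≤ ⟪T x, x⟫ * (K * ‖T x‖ ^ 2) := mul_le_mul_of_nonneg_left hTTx (hT.inner_nonneg_left x)
  have hpos : 0 < ‖T x‖ ^ 2 := by positivity
  nlinarith

end PositiveOperator

section SublinearGrowth

variable {E : Type*} [NormedAddCommGroup E] [NormedSpace ℝ E] {γ β : ℝ → E} {φ g : ℝ → ℝ} {K : ℝ}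

lemma tendsto_inv_smul_atTop_zero_of_forall_norm_le {f : ℝ → E}
    (hf : ∀ δ > 0, ∃ C, ∀ t ≥ 0, ‖f t‖ ≤ δ * t + C) : Tendsto (fun t => t⁻¹ • f t) atTop (𝓝 0) := by
  rw [NormedAddGroup.tendsto_nhds_zero]
  intro ε hε
  obtain ⟨C, hC⟩ := hf (ε / 2) (half_pos hε)
  have hCt : Tendsto (fun t : ℝ => C / t) atTop (𝓝 0) := tendsto_const_nhds.div_atTop tendsto_id
  filter_upwards [eventually_gt_atTop 0, hCt.eventually (gt_mem_nhds (half_pos hε))]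
    with t ht hCt
  calc ‖t⁻¹ • f t‖ = t⁻¹ * ‖f t‖ := by rw [norm_smul, norm_inv, Real.norm_of_nonneg ht.le]
    _ ≤ t⁻¹ * (ε / 2 * t + C) := by gcongr; exact hC t ht.le
    _ = ε / 2 + C / t := by field_simp
    _ < ε := by linarith

lemma norm_sub_le_of_sq_norm_deriv_le (hγ : ∀ t, HasDerivAt γ (β t) t)
    (hφ : ∀ t, HasDerivAt φ (g t) t) (hβ : ∀ t, ‖β t‖ ^ 2 ≤ K * g t) {δ : ℝ} (hδ : 0 < δ)
    {t : ℝ} (ht : 0 ≤ t) : ‖γ t - γ 0‖ ≤ δ * t + K / (4 * δ) * (φ t - φ 0) := by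
  have hbound : ∀ s, ‖β s‖ ≤ δ + K / (4 * δ) * g s := fun s => by
    -- AM–GM: `‖β‖ ≤ δ + ‖β‖² / (4δ)`
    have h4δ : 0 < 4 * δ := by positivity
    have : 4 * δ * ‖β s‖ ≤ 4 * δ * δ + K * g s := by nlinarith [sq_nonneg (‖β s‖ - 2 * δ), hβ s]
    rw [div_mul_eq_mul_div, ← sub_le_iff_le_add', le_div_iff₀ h4δ]
    linarith
  have hB : ∀ s, HasDerivAt (fun s => δ * s + K / (4 * δ) * (φ s - φ 0))
      (δ + K / (4 * δ) * g s) s := fun s => by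
    have := ((hasDerivAt_id' s).const_mul δ).add (((hφ s).sub_const (φ 0)).const_mul (K / (4 * δ)))
    rwa [mul_one] at this
  refine image_norm_le_of_norm_deriv_right_le_deriv_boundary (f := fun s => γ s - γ 0)
    (B := fun s => δ * s + K / (4 * δ) * (φ s - φ 0))
    (fun s _ => ((hγ s).sub_const _).continuousAt.continuousWithinAt)
    (fun s _ => ((hγ s).sub_const _).hasDerivWithinAt) (by simp)
    hB (fun s _ => hbound s) ⟨ht, le_rfl⟩

theorem tendsto_inv_smul_atTop_zero_of_sq_norm_deriv_le (hγ : ∀ t, HasDerivAt γ (β t) t)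
    (hφ : ∀ t, HasDerivAt φ (g t) t) (hβ : ∀ t, ‖β t‖ ^ 2 ≤ K * g t) {M : ℝ}
    (hφM : ∀ t, |φ t| ≤ M) : Tendsto (fun t => t⁻¹ • γ t) atTop (𝓝 0) := by
  refine tendsto_inv_smul_atTop_zero_of_forall_norm_le fun δ hδ =>
    ⟨‖γ 0‖ + |K| / (4 * δ) * (2 * M), fun t ht => ?_⟩
  have hφ_osc : K / (4 * δ) * (φ t - φ 0) ≤ |K| / (4 * δ) * (2 * M) :=
    calc K / (4 * δ) * (φ t - φ 0) ≤ |K / (4 * δ) * (φ t - φ 0)| := le_abs_self _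
      _ = |K| / (4 * δ) * |φ t - φ 0| := by
        rw [abs_mul, abs_div, abs_of_pos (by positivity : 0 < 4 * δ)]
      _ ≤ |K| / (4 * δ) * (2 * M) := by
        gcongr
        linarith [abs_sub (φ t) (φ 0), hφM t, hφM 0]
  linarith [norm_le_norm_add_norm_sub' (γ t) (γ 0),
    norm_sub_le_of_sq_norm_deriv_le hγ hφ hβ hδ ht]

end SublinearGrowth

theorem stmt19_general (d : ℕ) (A : EuclideanSpace ℝ (Fin d) → Matrix (Fin d) (Fin d) ℝ)
    (hA : ∀ i j, ContDiff ℝ 1 (fun y => A y i j)) (hAper : IsZdPeriodic d A)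
    (hApsd : ∀ y, (A y).PosSemidef)
    (v : EuclideanSpace ℝ (Fin d) → ℝ) (hv : ContDiff ℝ 2 v) (hvper : IsZdPeriodic d v)
    (X : ℝ → EuclideanSpace ℝ (Fin d) → EuclideanSpace ℝ (Fin d))
    (hX : ∀ x t, HasDerivAt (fun s => X s x)
      ((WithLp.toLp 2 ((A (X t x)).mulVec (fun j => gradient v (X t x) j)) : EuclideanSpace ℝ (Fin d))) t) :
    ∀ x : EuclideanSpace ℝ (Fin d),
      Tendsto (fun t : ℝ => t⁻¹ • X t x) atTop (𝓝 0) := by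
  intro x
  obtain ⟨K, hK⟩ := hAper.exists_toEuclideanLin_bound fun i j => (hA i j).continuous
  obtain ⟨M, hM⟩ := hvper.exists_norm_le hv.continuous
  have hApos : ∀ y, (A y).toEuclideanLin.IsPositive :=
    fun y => Matrix.isPositive_toEuclideanLin_iff.mpr (hApsd y)
  have hv_deriv : ∀ t, HasDerivAt (fun s => v (X s x))
      ⟪(A (X t x)).toEuclideanLin (gradient v (X t x)), gradient v (X t x)⟫ t := fun t => by
    have := ((hv.differentiable (by norm_num)) (X t x)).hasGradientAt.hasFDerivAt.comp_hasDerivAt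
      t (hX x t)
    rwa [InnerProductSpace.toDual_apply_apply, real_inner_comm] at this
  exact tendsto_inv_smul_atTop_zero_of_sq_norm_deriv_le (hX x) hv_deriv
    (fun t => (hApos _).norm_apply_sq_le (hK _) _) (fun t => hM _)

/-- For a current field `b = A∇v`, where `A` is a `C¹` `ℤ^d`-periodic symmetric positive
semidefinite matrix-valued function and `v` is a `C²` `ℤ^d`-periodic potential, the flow
satisfies `X(t,x)/t → 0` as `t → ∞` for every `x`. -/
theorem stmt19 (d : ℕ) (A : EuclideanSpace ℝ (Fin d) → Matrix (Fin d) (Fin d) ℝ)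
    (hA : ∀ i j, ContDiff ℝ 1 (fun y => A y i j)) (hAper : IsZdPeriodic d A)
    (hAsymm : ∀ y, (A y).IsSymm) (hApsd : ∀ y, (A y).PosSemidef)
    (v : EuclideanSpace ℝ (Fin d) → ℝ) (hv : ContDiff ℝ 2 v) (hvper : IsZdPeriodic d v)
    (X : ℝ → EuclideanSpace ℝ (Fin d) → EuclideanSpace ℝ (Fin d))
    (hX0 : ∀ x, X 0 x = x)
    (hX : ∀ x t, HasDerivAt (fun s => X s x)
      ((WithLp.toLp 2 ((A (X t x)).mulVec (fun j => gradient v (X t x) j)) : EuclideanSpace ℝ (Fin d))) t) :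
    ∀ x : EuclideanSpace ℝ (Fin d),
      Tendsto (fun t : ℝ => t⁻¹ • X t x) atTop (𝓝 0) :=
  stmt19_general d A hA hAper hApsd v hv hvper X hX
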